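/- arXiv:1812.08311 — 7 statements merged into one kernel-verified Lean document; each statement's English description precedes it below -/
import Mathlib

section
/- The polynomial p(z) = z + a_2 z^2 with complex coefficient a_2 is injective on the open unit disk if and only if |a_2| ≤ 1/2. -/
/-!
The difference quotient of `f z = z + a z²` factors as
`f z - f w = (z - w) (1 + a (z + w))`. For `‖a‖ ≤ 1/2` and `z, w` in the disk,
`‖a (z + w)‖ < 1`, so the second factor does not vanish and `f` is injective. For `‖a‖ > 1/2` the critical point `c = -1/(2a)` lies in the
disk, and `f` takes equal values at the two points `c ± ε` symmetric about it.
-/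

open Metric

theorem add_mul_sq_sub_add_mul_sq {R : Type*} [CommRing R] (a z w : R) :
    (z + a * z ^ 2) - (w + a * w ^ 2) = (z - w) * (1 + a * (z + w)) := by
  ring

theorem injOn_add_mul_sq_ball {𝕜 : Type*} [NormedField 𝕜] {a : 𝕜} (ha : ‖a‖ ≤ 1 / 2) :
    Set.InjOn (fun z : 𝕜 => z + a * z ^ 2) (ball 0 1) := by
  intro z hz w hw hzw
  rw [mem_ball_zero_iff] at hz hw
  have hprod : (z - w) * (1 + a * (z + w)) = 0 := by
    rw [← add_mul_sq_sub_add_mul_sq, sub_eq_zero]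
    exact hzw
  refine sub_eq_zero.1 ((mul_eq_zero.1 hprod).resolve_right fun h => ?_)
  have hsmall : ‖a * (z + w)‖ < 1 :=
    calc ‖a * (z + w)‖ ≤ 1 / 2 * (‖z‖ + ‖w‖) := by
          rw [norm_mul]; gcongr; exact norm_add_le z w
      _ < 1 := by linarith
  rw [eq_neg_of_add_eq_zero_right h, norm_neg, norm_one] at hsmall
  exact hsmall.false

theorem add_mul_sq_add_eq_sub_of_critical {R : Type*} [CommRing R] {a c : R}
    (hc : 1 + 2 * a * c = 0) (t : R) :
    (c + t) + a * (c + t) ^ 2 = (c - t) + a * (c - t) ^ 2 := by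
  rw [← sub_eq_zero, add_mul_sq_sub_add_mul_sq]
  linear_combination (2 * t) * hc

theorem not_injOn_add_mul_sq_ball {a : ℂ} (ha : 1 / 2 < ‖a‖) :
    ¬ Set.InjOn (fun z : ℂ => z + a * z ^ 2) (ball 0 1) := by
  have ha₀ : a ≠ 0 := norm_pos_iff.1 (by linarith)
  set c : ℂ := -(2 * a)⁻¹ with hc
  have hc_lt : ‖c‖ < 1 := by
    rw [hc, norm_neg, norm_inv, norm_mul, Complex.norm_two]
    exact inv_lt_one_of_one_lt₀ (by linarith)
  set ε : ℝ := (1 - ‖c‖) / 2 with hε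
  have hε_pos : 0 < ε := by linarith
  have hmem : ∀ z : ℂ, ‖z‖ ≤ ‖c‖ + ε → z ∈ ball (0 : ℂ) 1 := fun z hz => by
    rw [mem_ball_zero_iff]; linarith
  have hplus : c + ε ∈ ball (0 : ℂ) 1 := hmem _ <| by
    simpa [abs_of_pos hε_pos] using norm_add_le c (ε : ℂ)
  have hminus : c - ε ∈ ball (0 : ℂ) 1 := hmem _ <| by
    simpa [abs_of_pos hε_pos] using norm_sub_le c (ε : ℂ)
  have hcrit : 1 + 2 * a * c = 0 := by
    rw [hc]; field_simp; ring
  intro hinj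
  have heq := hinj hplus hminus (add_mul_sq_add_eq_sub_of_critical hcrit (ε : ℂ))
  have : (2 : ℂ) * ε = 0 := by linear_combination heq
  simp [hε_pos.ne'] at this

theorem stmt_0 (a₂ : ℂ) :
    Set.InjOn (fun z : ℂ => z + a₂ * z ^ 2) (Metric.ball 0 1) ↔ ‖a₂‖ ≤ 1 / 2 :=
  ⟨fun hinj => not_lt.1 fun ha => not_injOn_add_mul_sq_ball ha hinj, injOn_add_mul_sq_ball⟩
end

section
/- For every injective analytic polynomial p(z) = z + a_2 z^2 on the unit disk (so |a_2| ≤ 1/2), the image p(𝔻) contains the open disk of radius 1/2 about 0, and for |a_2| = 1/2 the image does not contain any open disk of radius r > 1/2 about 0. -/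
/-!
A preimage of `w` under `z ↦ z + a z²` is `z = 2w / (1 + s)` with `s² = 1 + 4aw`. Taking the
square root `s` in the closed right half-plane gives `‖1 + s‖ ≥ 1`, so `‖z‖ ≤ 2‖w‖ < 1` whenever
`‖w‖ < 1/2`. When `‖a‖ = 1/2`, the critical value `-1/(4a)` has modulus `1/2`,
and its only preimage is the critical point `-1/(2a)`, which lies on the unit circle.
-/

open Metric

namespace Complex

theorem exists_sq_eq_and_re_nonneg (u : ℂ) : ∃ s : ℂ, s ^ 2 = u ∧ 0 ≤ s.re := by
  obtain ⟨s, hs⟩ := IsAlgClosed.exists_pow_nat_eq u two_pos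
  rcases le_total 0 s.re with hre | hre
  · exact ⟨s, hs, hre⟩
  · exact ⟨-s, by rwa [neg_sq], by simpa using hre⟩

theorem one_le_norm_one_add_of_re_nonneg {s : ℂ} (hs : 0 ≤ s.re) : 1 ≤ ‖1 + s‖ :=
  calc (1 : ℝ) ≤ (1 + s).re := by simpa using hs
    _ ≤ ‖1 + s‖ := re_le_norm _

end Complex

theorem div_one_add_sqrt_add_mul_sq {a w s : ℂ} (hs : s ^ 2 = 1 + 4 * a * w) (h : 1 + s ≠ 0) :
    2 * w / (1 + s) + a * (2 * w / (1 + s)) ^ 2 = w := by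
  field_simp
  linear_combination (-w) * hs

theorem ball_half_subset_image_add_mul_sq (a : ℂ) :
    ball (0 : ℂ) (1 / 2) ⊆ (fun z : ℂ => z + a * z ^ 2) '' ball 0 1 := by
  intro w hw
  rw [mem_ball_zero_iff] at hw
  obtain ⟨s, hs, hre⟩ := Complex.exists_sq_eq_and_re_nonneg (1 + 4 * a * w)
  have hnorm := Complex.one_le_norm_one_add_of_re_nonneg hre
  refine ⟨2 * w / (1 + s), ?_, div_one_add_sqrt_add_mul_sq hs (norm_pos_iff.mp (by linarith))⟩
  rw [mem_ball_zero_iff, norm_div, norm_mul, Complex.norm_two, div_lt_one (by linarith)]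
  linarith

theorem add_mul_sq_add_inv_four_mul {a : ℂ} (ha : a ≠ 0) (z : ℂ) :
    z + a * z ^ 2 + (4 * a)⁻¹ = a * (z + (2 * a)⁻¹) ^ 2 := by
  field_simp
  ring

theorem eq_neg_inv_two_mul_of_add_mul_sq_eq {a z : ℂ} (ha : a ≠ 0)
    (h : z + a * z ^ 2 = -(4 * a)⁻¹) : z = -(2 * a)⁻¹ := by
  have hsq : a * (z + (2 * a)⁻¹) ^ 2 = 0 := by
    rw [← add_mul_sq_add_inv_four_mul ha, h, neg_add_cancel]
  simpa [ha, add_eq_zero_iff_eq_neg] using hsq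

theorem stmt_1_general (a₂ : ℂ) :
    Metric.ball (0 : ℂ) (1 / 2) ⊆ (fun z : ℂ => z + a₂ * z ^ 2) '' Metric.ball 0 1 ∧
      (‖a₂‖ = 1 / 2 → ∀ r : ℝ, 1 / 2 < r →
        ¬ Metric.ball (0 : ℂ) r ⊆ (fun z : ℂ => z + a₂ * z ^ 2) '' Metric.ball 0 1) := by
  refine ⟨ball_half_subset_image_add_mul_sq a₂, fun ha r hr hsub => ?_⟩
  have ha₀ : a₂ ≠ 0 := norm_ne_zero_iff.mp (by rw [ha]; norm_num)
  have hcrit : -(4 * a₂)⁻¹ ∈ ball (0 : ℂ) r := by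
    rw [mem_ball_zero_iff, norm_neg, norm_inv, norm_mul, ha]
    norm_num
    linarith
  obtain ⟨z, hz, hpz⟩ := hsub hcrit
  rw [eq_neg_inv_two_mul_of_add_mul_sq_eq ha₀ hpz, mem_ball_zero_iff, norm_neg, norm_inv,
    norm_mul, Complex.norm_two, ha] at hz
  norm_num at hz

theorem stmt_1 (a₂ : ℂ)
    (hinj : Set.InjOn (fun z : ℂ => z + a₂ * z ^ 2) (Metric.ball 0 1)) :
    Metric.ball (0 : ℂ) (1 / 2) ⊆ (fun z : ℂ => z + a₂ * z ^ 2) '' Metric.ball 0 1 ∧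
      (‖a₂‖ = 1 / 2 → ∀ r : ℝ, 1 / 2 < r →
        ¬ Metric.ball (0 : ℂ) r ⊆ (fun z : ℂ => z + a₂ * z ^ 2) '' Metric.ball 0 1) :=
  stmt_1_general a₂
end

section
/- If p(z) = z + a_2 z^2 + ... + a_N z^N is a polynomial of degree N ≥ 2 that is injective on the open unit disk, then |a_N| ≤ 1/N. -/
/-!
If `p` is injective on the disk, then `p'` has no zero there: near a critical point `w` we have
`p z - p w = φ(z) ^ k` with `k ≥ 2` and `φ` a local biholomorphism, so `p` is `k`-to-one near `w`.
Hence all `N - 1` roots of `p'` lie outside the disk, and since `p'(0) = 1` while `p'` has leading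
coefficient `N a_N`, Vieta gives `1 = N ‖a_N‖ ∏ ‖ρ‖ ≥ N ‖a_N‖`.
-/

open Polynomial Filter Topology Metric

theorem Filter.Eventually.exists_ne_of_nhds {X : Type*} [TopologicalSpace X] {x : X}
    [(𝓝[≠] x).NeBot] {p : X → Prop} (h : ∀ᶠ z in 𝓝 x, p z) : ∃ z, p z ∧ z ≠ x :=
  ((eventually_nhdsWithin_of_eventually_nhds (s := {x}ᶜ) h).and self_mem_nhdsWithin).exists

theorem AnalyticAt.exists_analyticAt_pow_eventuallyEq {h : ℂ → ℂ} {x : ℂ}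
    (hh : AnalyticAt ℂ h x) (hx : h x ≠ 0) {k : ℕ} (hk : k ≠ 0) :
    ∃ r : ℂ → ℂ, AnalyticAt ℂ r x ∧ r x ≠ 0 ∧ ∀ᶠ z in 𝓝 x, r z ^ k = h z := by
  obtain ⟨c, hc⟩ := IsAlgClosed.exists_pow_nat_eq (h x) (Nat.pos_of_ne_zero hk)
  have hc0 : c ≠ 0 := by rintro rfl; exact hx (by rw [← hc, zero_pow hk])
  have hkC : (k : ℂ) ≠ 0 := Nat.cast_ne_zero.mpr hk
  -- `h z / h x` is near `1`, where `Complex.log` is analytic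
  have hlog : AnalyticAt ℂ (fun z => Complex.log (h z / h x)) x :=
    (hh.fun_div analyticAt_const hx).clog (by simp [hx])
  refine ⟨fun z => c * Complex.exp (Complex.log (h z / h x) / k), ?_, by simp [hc0], ?_⟩
  · exact analyticAt_const.mul (hlog.div analyticAt_const hkC).cexp
  · filter_upwards [hh.continuousAt.eventually_ne hx] with z hz
    rw [mul_pow, ← Complex.exp_nat_mul, mul_div_cancel₀ _ hkC,
      Complex.exp_log (div_ne_zero hz hx), hc, mul_div_cancel₀ _ hx]

theorem not_injOn_of_eventually_sub_eq_pow_mul {f g : ℂ → ℂ} {x : ℂ} {s : Set ℂ} {k : ℕ}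
    (hk : 2 ≤ k) (hg : AnalyticAt ℂ g x) (hgx : g x ≠ 0)
    (hfg : ∀ᶠ z in 𝓝 x, f z - f x = (z - x) ^ k * g z) (hs : s ∈ 𝓝 x) : ¬Set.InjOn f s := by
  intro hinj
  obtain ⟨r, hr, hrx, hrg⟩ := hg.exists_analyticAt_pow_eventuallyEq hgx (k := k) (by omega)
  -- `f = f x + φ ^ k` near `x`, and `φ` maps a neighbourhood of `x` onto one of `0`
  set φ : ℂ → ℂ := fun z => (z - x) * r z
  have hφ : HasStrictDerivAt φ (r x) x := by
    simpa [φ] using HasStrictDerivAt.fun_mul ((hasStrictDerivAt_id x).sub_const x)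
      hr.hasStrictDerivAt
  have hmap : map φ (𝓝 x) = 𝓝 0 := by simpa [φ] using hφ.map_nhds_eq hrx
  have hU : ∀ᶠ w in 𝓝 0, ∃ z ∈ s, φ z = w ∧ f z = f x + w ^ k := by
    rw [← hmap, eventually_map]
    filter_upwards [hs, hfg, hrg] with z hzs hzf hzr
    exact ⟨z, hzs, rfl, by rw [mul_pow, hzr, ← hzf, add_sub_cancel]⟩
  obtain ⟨ζ, hζ⟩ : ∃ ζ : ℂ, IsPrimitiveRoot ζ k := ⟨_, Complex.isPrimitiveRoot_exp k (by omega)⟩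
  have hζU : ∀ᶠ w in 𝓝 0, ∃ z ∈ s, φ z = ζ * w ∧ f z = f x + (ζ * w) ^ k :=
    ((continuous_const_mul ζ).tendsto' 0 0 (mul_zero ζ)).eventually hU
  obtain ⟨w, ⟨⟨z₁, hz₁, hφ₁, hf₁⟩, ⟨z₂, hz₂, hφ₂, hf₂⟩⟩, hw⟩ := (hU.and hζU).exists_ne_of_nhds
  have hz : z₁ = z₂ := hinj hz₁ hz₂ (by rw [hf₁, hf₂, mul_pow, hζ.pow_eq_one, one_mul])
  refine hζ.ne_one (by omega) (mul_right_cancel₀ hw ?_)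
  rw [one_mul, ← hφ₂, ← hz, hφ₁]

theorem AnalyticAt.deriv_ne_zero_of_injOn {f : ℂ → ℂ} {x : ℂ} {s : Set ℂ}
    (hf : AnalyticAt ℂ f x) (hs : s ∈ 𝓝 x) (hinj : Set.InjOn f s) : deriv f x ≠ 0 := by
  intro hf'
  have horder : 2 ≤ analyticOrderAt (f · - f x) x := by
    rw [← hf.analyticOrderAt_deriv_add_one]
    have := Order.one_le_iff_ne_zero.mpr (analyticOrderAt_ne_zero.mpr ⟨hf.deriv, hf'⟩)
    exact (add_le_add_left this 1 : (1 : ℕ∞) + 1 ≤ _)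
  cases h : analyticOrderAt (f · - f x) x with
  | top =>
    rw [analyticOrderAt_eq_top] at h
    obtain ⟨z, ⟨hzs, hz⟩, hzx⟩ := (Filter.Eventually.and hs h).exists_ne_of_nhds
    exact hzx (hinj hzs (mem_of_mem_nhds hs) (sub_eq_zero.mp hz))
  | coe n =>
    obtain ⟨g, hg, hgx, hfg⟩ := ((hf.sub analyticAt_const).analyticOrderAt_eq_natCast).mp h
    rw [h] at horder
    exact not_injOn_of_eventually_sub_eq_pow_mul (by exact_mod_cast horder) hg hgx hfg hs hinj

theorem Polynomial.norm_leadingCoeff_le_norm_eval_zero {K : Type*} [NormedField K]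
    [IsAlgClosed K] {p : K[X]} (hp : ∀ z ∈ ball (0 : K) 1, p.eval z ≠ 0) :
    ‖p.leadingCoeff‖ ≤ ‖p.eval 0‖ := by
  rw [← coeff_zero_eq_eval_zero, (IsAlgClosed.splits p).coeff_zero_eq_leadingCoeff_mul_prod_roots,
    norm_mul, norm_mul, norm_pow, norm_neg, norm_one, one_pow, one_mul]
  refine le_mul_of_one_le_right (norm_nonneg _) ?_
  rw [← normHom_apply, map_multiset_prod]
  refine Multiset.one_le_prod_map fun ρ hρ => not_lt.mp fun hlt => ?_
  exact hp ρ (mem_ball_zero_iff.mpr hlt) (isRoot_of_mem_roots hρ)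

theorem Polynomial.coeff_X_add_sum_Icc_two {R : Type*} [Semiring R] (N : ℕ) (a : ℕ → R) (m : ℕ) :
    (X + ∑ n ∈ Finset.Icc 2 N, C (a n) * X ^ n).coeff m =
      (if m = 1 then 1 else 0) + if m ∈ Finset.Icc 2 N then a m else 0 := by
  simp [coeff_X, coeff_C_mul, coeff_X_pow, eq_comm]

theorem stmt_2 (N : ℕ) (hN : 2 ≤ N) (a : ℕ → ℂ) (hdeg : a N ≠ 0)
    (hinj : Set.InjOn (fun z : ℂ => z + ∑ n ∈ Finset.Icc 2 N, a n * z ^ n)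
      (Metric.ball 0 1)) :
    ‖a N‖ ≤ 1 / N := by
  set P : ℂ[X] := X + ∑ n ∈ Finset.Icc 2 N, C (a n) * X ^ n
  have hcoeff (m : ℕ) : P.coeff m = _ := coeff_X_add_sum_Icc_two N a m
  have hPcoeffN : P.coeff N = a N := by simp [hcoeff, hN, show N ≠ 1 by omega]
  have hPN : P.natDegree = N := by
    refine natDegree_eq_of_le_of_coeff_ne_zero
      (natDegree_le_iff_coeff_eq_zero.mpr fun m hm => ?_) (hPcoeffN ▸ hdeg)
    simp [hcoeff, show m ≠ 1 by omega, show ¬m ≤ N by omega]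
  have hlc : P.derivative.leadingCoeff = a N * N := by
    rw [leadingCoeff_derivative, leadingCoeff, hPN, hPcoeffN]
  have h0 : P.derivative.eval 0 = 1 := by
    rw [← coeff_zero_eq_eval_zero, coeff_derivative, hcoeff]
    simp
  have hP : ∀ z ∈ ball (0 : ℂ) 1, P.derivative.eval z ≠ 0 := fun z hz => by
    rw [← Polynomial.deriv]
    exact (AnalyticOnNhd.eval_polynomial P z (Set.mem_univ z)).deriv_ne_zero_of_injOn
      (isOpen_ball.mem_nhds hz) (by simpa [P, eval_finsetSum] using hinj)
  have hbound := norm_leadingCoeff_le_norm_eval_zero hP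
  rw [hlc, h0, norm_mul, norm_one, Complex.norm_natCast] at hbound
  rwa [le_div_iff₀ (by positivity)]
end

section
/- For the Suffridge polynomial q_N(z) = Σ_{k=1}^N A_{k,N} z^k with A_{k,N} = ((N-k+1)/N) sin(πk/(N+1))/sin(π/(N+1)), one has q_N(-1) = -((N+1)/(4N)) · (cos(π/(2(N+1))))^{-2}. -/
lemma geom_aux (z : ℂ) (N : ℕ) :
    (1 - z) * ∑ k ∈ Finset.Icc 1 N, z ^ k = z - z ^ (N + 1) := by
  induction N with
  | zero => simp
  | succ n ih =>
    rw [Finset.sum_Icc_succ_top (by omega : 1 ≤ n + 1), mul_add, ih]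
    ring

lemma poly_aux (z : ℂ) (N : ℕ) :
    (1 - z) ^ 2 * ∑ k ∈ Finset.Icc 1 N, (((N : ℂ) + 1 - k) * z ^ k)
      = z ^ (N + 2) - ((N : ℂ) + 1) * z ^ 2 + (N : ℂ) * z := by
  induction N with
  | zero => simp
  | succ n ih =>
    have hsplit : ∑ k ∈ Finset.Icc 1 (n + 1), (((n + 1 : ℕ) : ℂ) + 1 - k) * z ^ k
        = (∑ k ∈ Finset.Icc 1 n, (((n : ℂ) + 1 - k) * z ^ k)
            + ∑ k ∈ Finset.Icc 1 n, z ^ k) + z ^ (n + 1) := by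
      rw [Finset.sum_Icc_succ_top (by omega : 1 ≤ n + 1), ← Finset.sum_add_distrib]
      congr 1
      · exact Finset.sum_congr rfl fun k _ => by push_cast; ring
      · push_cast; ring
    rw [hsplit]
    push_cast
    linear_combination ih + (1 - z) * geom_aux z n

lemma sum_sin_aux (N : ℕ) (hN : 0 < N) :
    4 * Real.cos (Real.pi / (N + 1) / 2) ^ 2 *
      ∑ k ∈ Finset.Icc 1 N,
        (((N : ℝ) + 1 - k) * (-1) ^ k * Real.sin (k * (Real.pi / (N + 1))))
      = -((N : ℝ) + 1) * Real.sin (Real.pi / (N + 1)) := by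
  set θ : ℝ := Real.pi / (N + 1) with hθ
  set E : ℂ := Complex.exp (θ * Complex.I) with hE
  set z : ℂ := -E with hz
  have hNne : ((N : ℝ) + 1) ≠ 0 := by positivity
  have hπ : ((N : ℝ) + 1) * θ = Real.pi := by rw [hθ]; field_simp
  -- E^(N+1) = -1
  have hE1 : E ^ (N + 1) = -1 := by
    rw [hE, ← Complex.exp_nat_mul]
    rw [show ((N + 1 : ℕ) : ℂ) * ((θ : ℂ) * Complex.I) = (Real.pi : ℂ) * Complex.I by
      rw [← hπ]; push_cast; ring]
    exact Complex.exp_pi_mul_I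
  -- (1-z)^2 = 4 cos(θ/2)^2 * E
  have hcos : ((4 * Real.cos (θ / 2) ^ 2 : ℝ) : ℂ) * E = (1 - z) ^ 2 := by
    have h1 : (4 * Real.cos (θ / 2) ^ 2 : ℝ) = 2 + 2 * Real.cos θ := by
      have h := Real.cos_sq (θ / 2)
      rw [show 2 * (θ / 2) = θ by ring] at h
      linarith
    rw [h1]
    have h2 : 2 * Complex.cos θ * E = E ^ 2 + 1 := by
      rw [Complex.two_cos, hE, add_mul, ← Complex.exp_add, ← Complex.exp_add, pow_two,
        ← Complex.exp_add]
      ring_nf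
      simp
      ring
    push_cast
    rw [hz]
    linear_combination h2
  -- key complex identity
  have hzpow : z ^ (N + 2) = (-1 : ℂ) ^ (N + 1) * E := by
    have h0 : z ^ (N + 2) = (-1 : ℂ) ^ (N + 2) * E ^ (N + 2) := by rw [hz, neg_pow]
    rw [h0, pow_succ E (N + 1), hE1, pow_succ (-1 : ℂ) (N + 1)]
    ring
  have hkey : ((4 * Real.cos (θ / 2) ^ 2 : ℝ) : ℂ) *
      (∑ k ∈ Finset.Icc 1 N, (((N : ℂ) + 1 - k) * z ^ k))
      = ((-1 : ℂ) ^ (N + 1) - (N : ℂ)) - ((N : ℂ) + 1) * E := by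
    have hEne : E ≠ 0 := Complex.exp_ne_zero _
    apply mul_left_cancel₀ hEne
    have hp := poly_aux z N
    calc E * (((4 * Real.cos (θ / 2) ^ 2 : ℝ) : ℂ) *
          (∑ k ∈ Finset.Icc 1 N, (((N : ℂ) + 1 - k) * z ^ k)))
        = (1 - z) ^ 2 * (∑ k ∈ Finset.Icc 1 N, (((N : ℂ) + 1 - k) * z ^ k)) := by
          rw [← hcos]; ring
      _ = z ^ (N + 2) - ((N : ℂ) + 1) * z ^ 2 + (N : ℂ) * z := hp
      _ = E * (((-1 : ℂ) ^ (N + 1) - (N : ℂ)) - ((N : ℂ) + 1) * E) := by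
          rw [hzpow, hz]; ring
  -- take imaginary parts
  have him : (∑ k ∈ Finset.Icc 1 N, (((N : ℂ) + 1 - k) * z ^ k)).im
      = ∑ k ∈ Finset.Icc 1 N, (((N : ℝ) + 1 - k) * (-1) ^ k * Real.sin (k * θ)) := by
    rw [Complex.im_sum]
    refine Finset.sum_congr rfl fun k _ => ?_
    have hzk : ((N : ℂ) + 1 - k) * z ^ k
        = ((((N : ℝ) + 1 - k) * (-1) ^ k : ℝ) : ℂ) * Complex.exp ((k * θ : ℝ) * Complex.I) := by
      rw [hz, neg_pow, hE, ← Complex.exp_nat_mul]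
      rw [show ((k : ℕ) : ℂ) * ((θ : ℝ) * Complex.I) = ((k * θ : ℝ) : ℂ) * Complex.I by
        push_cast; ring]
      push_cast
      ring
    rw [hzk, Complex.im_ofReal_mul, Complex.exp_ofReal_mul_I_im]
  have h2 := congrArg Complex.im hkey
  rw [Complex.im_ofReal_mul, him] at h2
  rw [h2]
  have him0 : ((-1 : ℂ) ^ (N + 1)).im = 0 := by
    rcases Nat.even_or_odd (N + 1) with h | h
    · rw [h.neg_one_pow]; simp
    · rw [h.neg_one_pow]; simp
  have hE2 : (((N : ℂ) + 1) * E).im = ((N : ℝ) + 1) * Real.sin θ := by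
    rw [show ((N : ℂ) + 1) = (((N : ℝ) + 1 : ℝ) : ℂ) by push_cast; ring, hE,
      Complex.im_ofReal_mul, Complex.exp_ofReal_mul_I_im]
  rw [Complex.sub_im, Complex.sub_im, him0, hE2]
  simp
  ring

theorem stmt_8 (N : ℕ) (hN : 0 < N) :
    (∑ k ∈ Finset.Icc 1 N,
        (((N : ℝ) - k + 1) / N *
          (Real.sin (Real.pi * k / (N + 1)) / Real.sin (Real.pi / (N + 1)))) * (-1 : ℝ) ^ k) =
      -(((N : ℝ) + 1) / (4 * N)) * (Real.cos (Real.pi / (2 * (N + 1)))) ^ (-2 : ℤ) := by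
  set θ : ℝ := Real.pi / (N + 1) with hθ
  have hn : (0 : ℝ) < N := by exact_mod_cast hN
  have hθpos : 0 < θ := by rw [hθ]; positivity
  have hθlt : θ < Real.pi := by
    rw [hθ]
    apply div_lt_self Real.pi_pos
    linarith
  have hsin : 0 < Real.sin θ := Real.sin_pos_of_pos_of_lt_pi hθpos hθlt
  have hc : 0 < Real.cos (θ / 2) :=
    Real.cos_pos_of_mem_Ioo ⟨by linarith [Real.pi_pos], by linarith⟩
  have hsne : Real.sin θ ≠ 0 := ne_of_gt hsin
  have hcne : Real.cos (θ / 2) ≠ 0 := ne_of_gt hc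
  have hnne : (N : ℝ) ≠ 0 := ne_of_gt hn
  have hhalf : Real.pi / (2 * ((N : ℝ) + 1)) = θ / 2 := by rw [hθ, div_div, mul_comm]
  have hterms : ∀ k ∈ Finset.Icc 1 N,
      (((N : ℝ) - k + 1) / N * (Real.sin (Real.pi * k / (N + 1)) / Real.sin θ)) * (-1 : ℝ) ^ k
        = (((N : ℝ) + 1 - k) * (-1) ^ k * Real.sin (k * θ)) * ((N : ℝ) * Real.sin θ)⁻¹ := by
    intro k _
    rw [show Real.pi * k / ((N : ℝ) + 1) = k * θ by rw [hθ]; ring]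
    field_simp
    ring
  rw [Finset.sum_congr rfl hterms, ← Finset.sum_mul, hhalf]
  have hSval : ∑ k ∈ Finset.Icc 1 N, (((N : ℝ) + 1 - k) * (-1) ^ k * Real.sin (k * θ))
      = -((N : ℝ) + 1) * Real.sin θ / (4 * Real.cos (θ / 2) ^ 2) := by
    rw [eq_div_iff (by positivity)]
    linarith [sum_sin_aux N hN]
  rw [hSval, show Real.cos (θ / 2) ^ (-2 : ℤ) = (Real.cos (θ / 2) ^ 2)⁻¹ by
    rw [zpow_neg, zpow_two, sq]]
  field_simp
end

section
/- Let p(z) = z + a_2 z^2 + a_3 z^3 with real coefficients, a_3 > 0, and suppose x_0 := -a_2(1+a_3)/(4a_3) satisfies -1 < x_0 < 1. Then min_{|z|=1} |p(z)| = |1-a_3| · (1 - a_2^2/(4a_3))^{1/2}, attained exactly at the two points x_0 ± i√(1-x_0^2). -/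
/-!
On the unit circle `z * conj z = 1`, so `p z = z ^ 2 * (conj z + a₂ + a₃ z)`, and with `x = Re z` this gives
`‖p z‖² = (a₂ + (1 + a₃) x)² + (1 - a₃)² (1 - x²)`. Completing the square in `x` turns this into
`(1 - a₃)² (1 - a₂² / (4 a₃)) + 4 a₃ (x - x₀)²`. Since `a₃ > 0`, the minimum over the circle is attained
exactly where `Re z = x₀`, and `|x₀| < 1` forces `a₂² < 4 a₃`, so the square root is that of a
nonnegative number.
-/

namespace Complex

open ComplexConjugate

theorem re_sq_add_im_sq_of_norm_eq_one {z : ℂ} (hz : ‖z‖ = 1) : z.re ^ 2 + z.im ^ 2 = 1 := by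
  have h := Complex.sq_norm z
  rw [hz, normSq_apply] at h
  linear_combination -h

theorem re_eq_iff_of_norm_eq_one {z : ℂ} (hz : ‖z‖ = 1) (x : ℝ) :
    z.re = x ↔ z = ⟨x, √(1 - x ^ 2)⟩ ∨ z = ⟨x, -√(1 - x ^ 2)⟩ := by
  have hz' := re_sq_add_im_sq_of_norm_eq_one hz
  constructor
  · rintro rfl
    have him : z.im ^ 2 = √(1 - z.re ^ 2) ^ 2 := by
      rw [Real.sq_sqrt (by nlinarith)]; linarith
    rcases sq_eq_sq_iff_eq_or_eq_neg.mp him with h | h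
    · exact .inl (ext rfl h)
    · exact .inr (ext rfl h)
  · rintro (rfl | rfl) <;> rfl

theorem norm_sq_cubic_of_norm_eq_one (a₂ a₃ : ℝ) {z : ℂ} (hz : ‖z‖ = 1) :
    ‖z + a₂ * z ^ 2 + a₃ * z ^ 3‖ ^ 2 =
      (a₂ + (1 + a₃) * z.re) ^ 2 + (1 - a₃) ^ 2 * (1 - z.re ^ 2) := by
  have hconj : z * conj z = 1 := by
    rw [mul_conj, ← Complex.sq_norm, hz]; norm_num
  have hfactor : z + a₂ * z ^ 2 + a₃ * z ^ 3 = z ^ 2 * (conj z + a₂ + a₃ * z) := by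
    linear_combination (-z) * hconj
  rw [hfactor, norm_mul, norm_pow, hz, one_pow, one_mul, Complex.sq_norm, normSq_apply]
  simp only [add_re, add_im, conj_re, conj_im, mul_re, mul_im, ofReal_re, ofReal_im]
  linear_combination (1 - a₃) ^ 2 * re_sq_add_im_sq_of_norm_eq_one hz

end Complex

theorem cubic_circle_quadratic_eq {a₂ a₃ x₀ : ℝ} (ha₃ : a₃ ≠ 0)
    (hx₀ : x₀ = -(a₂ * (1 + a₃)) / (4 * a₃)) (x : ℝ) :
    (a₂ + (1 + a₃) * x) ^ 2 + (1 - a₃) ^ 2 * (1 - x ^ 2) =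
      (1 - a₃) ^ 2 * (1 - a₂ ^ 2 / (4 * a₃)) + 4 * a₃ * (x - x₀) ^ 2 := by
  subst hx₀
  field_simp
  ring

theorem sq_lt_four_mul_of_abs_lt_one {a₂ a₃ x₀ : ℝ} (ha₃ : 0 < a₃)
    (hx₀ : x₀ = -(a₂ * (1 + a₃)) / (4 * a₃)) (h₁ : -1 < x₀) (h₂ : x₀ < 1) :
    a₂ ^ 2 < 4 * a₃ := by
  have hx₀' : a₂ * (1 + a₃) = -(4 * a₃ * x₀) := by
    rw [hx₀]; field_simp
  have hx₀sq : x₀ ^ 2 < 1 := by nlinarith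
  -- `a₂² (1 + a₃)² = 16 a₃² x₀² < 16 a₃² ≤ 4 a₃ (1 + a₃)²`
  nlinarith [sq_nonneg (1 - a₃), mul_pos ha₃ ha₃, congrArg (· ^ 2) hx₀']

theorem stmt_12 (a₂ a₃ : ℝ) (ha₃ : 0 < a₃)
    (x₀ : ℝ) (hx₀ : x₀ = -(a₂ * (1 + a₃)) / (4 * a₃)) (h₁ : -1 < x₀) (h₂ : x₀ < 1)
    (p : ℂ → ℂ) (hp : ∀ z, p z = z + (a₂ : ℂ) * z ^ 2 + (a₃ : ℂ) * z ^ 3) :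
    (∀ z : ℂ, ‖z‖ = 1 →
        |1 - a₃| * Real.sqrt (1 - a₂ ^ 2 / (4 * a₃)) ≤ ‖p z‖) ∧
      (∀ z : ℂ, ‖z‖ = 1 →
        (‖p z‖ = |1 - a₃| * Real.sqrt (1 - a₂ ^ 2 / (4 * a₃)) ↔
          z = Complex.mk x₀ (Real.sqrt (1 - x₀ ^ 2)) ∨
            z = Complex.mk x₀ (-Real.sqrt (1 - x₀ ^ 2)))) := by
  have hq : 0 ≤ 1 - a₂ ^ 2 / (4 * a₃) := by
    rw [sub_nonneg, div_le_one (by positivity)]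
    exact (sq_lt_four_mul_of_abs_lt_one ha₃ hx₀ h₁ h₂).le
  set M := |1 - a₃| * √(1 - a₂ ^ 2 / (4 * a₃)) with hM
  have hM0 : 0 ≤ M := by positivity
  have key : ∀ z : ℂ, ‖z‖ = 1 → ‖p z‖ ^ 2 = M ^ 2 + 4 * a₃ * (z.re - x₀) ^ 2 := by
    intro z hz
    rw [hp, Complex.norm_sq_cubic_of_norm_eq_one a₂ a₃ hz, cubic_circle_quadratic_eq ha₃.ne' hx₀,
      hM, mul_pow, sq_abs, Real.sq_sqrt hq]
  refine ⟨fun z hz => ?_, fun z hz => ?_⟩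
  · rw [← pow_le_pow_iff_left₀ hM0 (norm_nonneg _) two_ne_zero, key z hz]
    exact le_add_of_nonneg_right (by positivity)
  · rw [← Complex.re_eq_iff_of_norm_eq_one hz, ← sq_eq_sq₀ (norm_nonneg _) hM0, key z hz]
    simp [ha₃.ne', sub_eq_zero]
end

section
/- For the polynomial p_3(z) = z + (2/√5) z^2 + (1/2)(1 - 1/√5) z^3, the minimum of |p_3(z)| over the unit circle equals |p_3(-1)| = (3 - √5)/2. -/
/-!
On the unit circle `|p₃ z| = |a + b z + c z²|` with `a = 1`, `b = 2/√5`, `c = (1 - 1/√5)/2`, and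
for real coefficients `|a + b z + c z²|² - (a - b + c)²` factors as `2 (1 + x) (b (a + c) + 2 a c (x - 1))`
with `x = Re z`. For `a, c ≥ 0` the second factor is at least `b (a + c) - 4 a c`, which for `p₃` is
`√5 - 11/5 > 0`, so the minimum is attained at `z = -1`.
-/

open Complex

theorem norm_sq_quadratic_of_norm_eq_one (a b c : ℝ) {z : ℂ} (hz : ‖z‖ = 1) :
    ‖(a : ℂ) + b * z + c * z ^ 2‖ ^ 2 =
      (a - b + c) ^ 2 + 2 * (1 + z.re) * (b * (a + c) + 2 * a * c * (z.re - 1)) := by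
  have hre_im : z.re * z.re + z.im * z.im = 1 := by
    rw [← normSq_apply, ← Complex.sq_norm, hz, one_pow]
  rw [Complex.sq_norm, normSq_apply]
  simp only [add_re, add_im, mul_re, mul_im, ofReal_re, ofReal_im, pow_two]
  linear_combination ((b + 2 * c * z.re) ^ 2 - 2 * c * (a + b * z.re + c * z.re ^ 2)
    + c ^ 2 * (z.im ^ 2 + 1 - z.re ^ 2)) * hre_im

theorem abs_sub_add_le_norm_quadratic {a b c : ℝ} (ha : 0 ≤ a) (hc : 0 ≤ c)
    (hb : 4 * a * c ≤ b * (a + c)) {z : ℂ} (hz : ‖z‖ = 1) :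
    |a - b + c| ≤ ‖(a : ℂ) + b * z + c * z ^ 2‖ := by
  have hre : |z.re| ≤ 1 := hz ▸ abs_re_le_norm z
  have hfactor : 0 ≤ b * (a + c) + 2 * a * c * (z.re - 1) := by
    nlinarith [mul_nonneg (mul_nonneg ha hc) (by linarith [(abs_le.mp hre).1] : 0 ≤ z.re + 1)]
  have hsq : (a - b + c) ^ 2 ≤ ‖(a : ℂ) + b * z + c * z ^ 2‖ ^ 2 := by
    rw [norm_sq_quadratic_of_norm_eq_one a b c hz]
    nlinarith [(abs_le.mp hre).1]
  simpa using sq_le_sq.mp hsq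

theorem isLeast_norm_cubic_on_unit_circle {a b c : ℝ} (ha : 0 ≤ a) (hc : 0 ≤ c)
    (hb : 4 * a * c ≤ b * (a + c)) (p : ℂ → ℂ)
    (hp : ∀ z, p z = a * z + b * z ^ 2 + c * z ^ 3) :
    IsLeast {r : ℝ | ∃ z : ℂ, ‖z‖ = 1 ∧ r = ‖p z‖} ‖p (-1)‖ ∧ ‖p (-1)‖ = |a - b + c| := by
  have hp' : ∀ z, ‖p z‖ = ‖z‖ * ‖(a : ℂ) + b * z + c * z ^ 2‖ := fun z => by
    rw [hp, ← norm_mul]; ring_nf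
  have hvalue : ‖p (-1)‖ = |a - b + c| := by
    rw [hp', norm_neg, norm_one, one_mul, ← Real.norm_eq_abs, ← Complex.norm_real]
    push_cast; ring_nf
  refine ⟨⟨⟨-1, by simp, rfl⟩, ?_⟩, hvalue⟩
  rintro r ⟨z, hz, rfl⟩
  rw [hvalue, hp', hz, one_mul]
  exact abs_sub_add_le_norm_quadratic ha hc hb hz

theorem stmt_14 (p₃ : ℂ → ℂ)
    (hp₃ : ∀ z, p₃ z = z + (2 / Real.sqrt 5 : ℝ) * z ^ 2 +
      ((1 / 2 * (1 - 1 / Real.sqrt 5) : ℝ)) * z ^ 3) :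
    IsLeast {r : ℝ | ∃ z : ℂ, ‖z‖ = 1 ∧ r = ‖p₃ z‖} ‖p₃ (-1)‖ ∧
      ‖p₃ (-1)‖ = (3 - Real.sqrt 5) / 2 := by
  set s := Real.sqrt 5
  have hs : s ^ 2 = 5 := Real.sq_sqrt (by norm_num)
  have hs_pos : 0 < s := by positivity
  have hc : 0 ≤ 1 / 2 * (1 - 1 / s) := by
    have : 1 / s ≤ 1 := by rw [div_le_one hs_pos]; nlinarith
    linarith
  -- `b (a + c) - 4 a c = √5 - 11/5`, positive since `5 > (11/5)²`
  have hb : 4 * 1 * (1 / 2 * (1 - 1 / s)) ≤ 2 / s * (1 + 1 / 2 * (1 - 1 / s)) := by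
    field_simp
    nlinarith
  have hvalue : 1 - 2 / s + 1 / 2 * (1 - 1 / s) = (3 - s) / 2 := by
    field_simp
    nlinarith
  obtain ⟨hleast, hnorm⟩ := isLeast_norm_cubic_on_unit_circle zero_le_one hc hb p₃
    (fun z => by rw [hp₃, Complex.ofReal_one, one_mul])
  refine ⟨hleast, ?_⟩
  rw [hnorm, hvalue, abs_of_nonneg (by nlinarith)]
end

section
/- For the Suffridge polynomial q_3(z) = z + (2√2/3) z^2 + (1/3) z^3, the minimum of |q_3(z)| over the unit circle equals 2/(3√3), attained at the points z = -2√2/3 ± (1/3)i, and in particular this minimum is strictly greater than (3-√5)/2. -/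
/-!
On the unit circle `z⁻¹ = conj z`, so `q₃ z = z² (conj z + 2√2/3 + z/3)`, and the bracket has real part
`4x/3 + 2√2/3` and imaginary part `-2y/3` for `z = x + iy`. Using `y² = 1 - x²`,
`|q₃ z|² = 4/3 (x + 2√2/3)² + 4/27`, which is minimal exactly on the vertical line `x = -2√2/3`.
-/

open Complex ComplexConjugate

noncomputable def suffridgeQ₃ (z : ℂ) : ℂ :=
  z + (2 * Real.sqrt 2 / 3 : ℝ) * z ^ 2 + (1 / 3 : ℝ) * z ^ 3

lemma norm_add_mul_sq_add_third_cube (c : ℝ) {z : ℂ} (hz : ‖z‖ = 1) :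
    ‖z + c * z ^ 2 + (1 / 3 : ℝ) * z ^ 3‖ = ‖conj z + c + z / 3‖ := by
  have hzz : z * conj z = 1 := by simp [mul_conj, normSq_eq_norm_sq, hz]
  have hfactor : z + c * z ^ 2 + (1 / 3 : ℝ) * z ^ 3 = z ^ 2 * (conj z + c + z / 3) := by
    push_cast
    linear_combination (-z) * hzz
  rw [hfactor, norm_mul, norm_pow, hz, one_pow, one_mul]

lemma sq_norm_conj_add_add_third (c : ℝ) {z : ℂ} (hz : ‖z‖ = 1) :
    ‖conj z + c + z / 3‖ ^ 2 = 4 / 3 * (z.re + c) ^ 2 + (4 - 3 * c ^ 2) / 9 := by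
  have hxy : z.re ^ 2 + z.im ^ 2 = 1 := by
    have h := normSq_eq_norm_sq z
    rw [hz, normSq_apply] at h
    linear_combination h
  rw [Complex.sq_norm, normSq_apply]
  simp only [add_re, add_im, conj_re, conj_im, ofReal_re, ofReal_im, div_ofNat_re, div_ofNat_im]
  linear_combination (4 / 9 : ℝ) * hxy

lemma sq_norm_suffridgeQ₃ {z : ℂ} (hz : ‖z‖ = 1) :
    ‖suffridgeQ₃ z‖ ^ 2 = 4 / 3 * (z.re + 2 * Real.sqrt 2 / 3) ^ 2 + 4 / 27 := by
  have h2 : Real.sqrt 2 ^ 2 = 2 := Real.sq_sqrt zero_le_two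
  rw [suffridgeQ₃, norm_add_mul_sq_add_third_cube _ hz, sq_norm_conj_add_add_third _ hz]
  linear_combination (-4 / 27 : ℝ) * h2

lemma sq_two_div_three_mul_sqrt_three : (2 / (3 * Real.sqrt 3)) ^ 2 = 4 / 27 := by
  rw [div_pow, mul_pow, Real.sq_sqrt zero_le_three]
  norm_num

lemma two_div_three_mul_sqrt_three_le_norm_suffridgeQ₃ {z : ℂ} (hz : ‖z‖ = 1) :
    2 / (3 * Real.sqrt 3) ≤ ‖suffridgeQ₃ z‖ := by
  refine (pow_le_pow_iff_left₀ (by positivity) (norm_nonneg _) two_ne_zero).mp ?_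
  rw [sq_two_div_three_mul_sqrt_three, sq_norm_suffridgeQ₃ hz]
  nlinarith [sq_nonneg (z.re + 2 * Real.sqrt 2 / 3)]

lemma norm_suffridgeQ₃_of_re_eq {z : ℂ} (hz : ‖z‖ = 1) (hre : z.re = -(2 * Real.sqrt 2) / 3) :
    ‖suffridgeQ₃ z‖ = 2 / (3 * Real.sqrt 3) := by
  refine (pow_left_inj₀ (norm_nonneg _) (by positivity) two_ne_zero).mp ?_
  rw [sq_two_div_three_mul_sqrt_three, sq_norm_suffridgeQ₃ hz, hre]
  ring

lemma norm_mk_neg_two_sqrt_two_div_three {y : ℝ} (hy : y ^ 2 = 1 / 9) :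
    ‖(⟨-(2 * Real.sqrt 2) / 3, y⟩ : ℂ)‖ = 1 := by
  have h2 : Real.sqrt 2 ^ 2 = 2 := Real.sq_sqrt zero_le_two
  rw [norm_def, normSq_mk, Real.sqrt_eq_one]
  linear_combination (4 / 9 : ℝ) * h2 + hy

lemma three_sub_sqrt_five_div_two_lt_two_div_three_mul_sqrt_three :
    (3 - Real.sqrt 5) / 2 < 2 / (3 * Real.sqrt 3) := by
  have h5 : Real.sqrt 5 ^ 2 = 5 := Real.sq_sqrt (by norm_num)
  -- after squaring, the claim `(7 - 3√5)/2 < 4/27` is `181 < 81√5`, i.e. `181² < 81² · 5`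
  have hlt : 181 < 81 * Real.sqrt 5 := by
    rw [← div_lt_iff₀' (by norm_num), Real.lt_sqrt (by norm_num)]
    norm_num
  have hpos : 0 ≤ (3 - Real.sqrt 5) / 2 := by
    nlinarith [Real.sqrt_nonneg 5]
  refine (pow_lt_pow_iff_left₀ hpos (by positivity) two_ne_zero).mp ?_
  rw [sq_two_div_three_mul_sqrt_three]
  nlinarith

theorem stmt_15 (q₃ : ℂ → ℂ)
    (hq₃ : ∀ z, q₃ z = z + (2 * Real.sqrt 2 / 3 : ℝ) * z ^ 2 + (1 / 3 : ℝ) * z ^ 3) :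
    IsLeast {r : ℝ | ∃ z : ℂ, ‖z‖ = 1 ∧ r = ‖q₃ z‖} (2 / (3 * Real.sqrt 3)) ∧
      ‖q₃ (Complex.mk (-(2 * Real.sqrt 2) / 3) (1 / 3))‖ = 2 / (3 * Real.sqrt 3) ∧
      ‖q₃ (Complex.mk (-(2 * Real.sqrt 2) / 3) (-(1 / 3)))‖ = 2 / (3 * Real.sqrt 3) ∧
      (3 - Real.sqrt 5) / 2 < 2 / (3 * Real.sqrt 3) := by
  obtain rfl : q₃ = suffridgeQ₃ := funext hq₃
  have hupper := norm_mk_neg_two_sqrt_two_div_three (y := 1 / 3) (by norm_num)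
  have hlower := norm_mk_neg_two_sqrt_two_div_three (y := -(1 / 3)) (by norm_num)
  have hmin_upper := norm_suffridgeQ₃_of_re_eq hupper rfl
  refine ⟨⟨⟨_, hupper, hmin_upper.symm⟩, ?_⟩, hmin_upper, norm_suffridgeQ₃_of_re_eq hlower rfl,
    three_sub_sqrt_five_div_two_lt_two_div_three_mul_sqrt_three⟩
  rintro r ⟨z, hz, rfl⟩
  exact two_div_three_mul_sqrt_three_le_norm_suffridgeQ₃ hz
end
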